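/- Asymptotic completeness of full unbiased evaluation in the probabilistic Call-by-Value λ-calculus: for every multi-distribution m and every subdistribution q over NF, if m ⇒⇓ q then there exists a subdistribution p over NF with q ≤ p (pointwise) and m ⇉E⇓ p. -/

import Mathlib

/-- Terms of the probabilistic Call-by-Value λ-calculus `Λ⊕`, in de Bruijn
representation: `M ::= x | λx.M | M M | M ⊕ M`. -/
inductive PTm : Type
  | var : ℕ → PTm
  | lam : PTm → PTm
  | app : PTm → PTm → PTm
  | oplus : PTm → PTm → PTm
deriving DecidableEq

namespace PTm

/-- Lift (shift by one) the free variables of index `≥ d`. -/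
def lift (d : ℕ) : PTm → PTm
  | var n => if n < d then var n else var (n + 1)
  | lam M => lam (lift (d + 1) M)
  | app M N => app (lift d M) (lift d N)
  | oplus M N => oplus (lift d M) (lift d N)

/-- Capture-avoiding substitution `M[N/k]`. -/
def subst : PTm → ℕ → PTm → PTm
  | var n, k, N => if n = k then N else if k < n then var (n - 1) else var n
  | lam M, k, N => lam (subst M (k + 1) (lift 0 N))
  | app M₁ M₂, k, N => app (subst M₁ k N) (subst M₂ k N)
  | oplus M₁ M₂, k, N => oplus (subst M₁ k N) (subst M₂ k N)

end PTm

/-- Values: variables and abstractions. -/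
inductive IsValue : PTm → Prop
  | var (n : ℕ) : IsValue (PTm.var n)
  | lam (M : PTm) : IsValue (PTm.lam M)

/-- Full βv-reduction on terms: closure of `(λx.M)V ↦βv M[V/x]` (`V` a value) under
arbitrary contexts `C ::= ⟨⟩ | λx.C | C M | M C | C ⊕ M | M ⊕ C`. -/
inductive FullBv : PTm → PTm → Prop
  | beta {M V} : IsValue V → FullBv (PTm.app (PTm.lam M) V) (M.subst 0 V)
  | lam {M M'} : FullBv M M' → FullBv (PTm.lam M) (PTm.lam M')
  | appL {M M' N} : FullBv M M' → FullBv (PTm.app M N) (PTm.app M' N)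
  | appR {M N N'} : FullBv N N' → FullBv (PTm.app M N) (PTm.app M N')
  | oplusL {M M' N} : FullBv M M' → FullBv (PTm.oplus M N) (PTm.oplus M' N)
  | oplusR {M N N'} : FullBv N N' → FullBv (PTm.oplus M N) (PTm.oplus M N')

/-- Weak βv-reduction: closure of `↦βv` under weak contexts `W ::= ⟨⟩ | W M | M W`. -/
inductive WeakBv : PTm → PTm → Prop
  | beta {M V} : IsValue V → WeakBv (PTm.app (PTm.lam M) V) (M.subst 0 V)
  | appL {M M' N} : WeakBv M M' → WeakBv (PTm.app M N) (PTm.app M' N)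
  | appR {M N N'} : WeakBv N N' → WeakBv (PTm.app M N) (PTm.app M N')

/-- `OplusRed M M₁ M₂` : `M = W⟨P ⊕ Q⟩` for a weak context `W`, with branches
`M₁ = W⟨P⟩` and `M₂ = W⟨Q⟩`. -/
inductive OplusRed : PTm → PTm → PTm → Prop
  | root (M N : PTm) : OplusRed (PTm.oplus M N) M N
  | appL {P P₁ P₂ Q} : OplusRed P P₁ P₂ →
      OplusRed (PTm.app P Q) (PTm.app P₁ Q) (PTm.app P₂ Q)
  | appR {P Q Q₁ Q₂} : OplusRed Q Q₁ Q₂ →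
      OplusRed (PTm.app P Q) (PTm.app P Q₁) (PTm.app P Q₂)

/-- Multi-distributions: finite multisets of pairs `(p, M)`. -/
abbrev MDist := Multiset (NNReal × PTm)

/-- The multi-distribution `[1 M]`. -/
def single (M : PTm) : MDist := {((1 : NNReal), M)}

/-- A multi-distribution proper: all probabilities are in `(0,1]` and their sum is `≤ 1`. -/
def IsMDist (m : MDist) : Prop :=
  (∀ q ∈ m, 0 < q.1 ∧ q.1 ≤ 1) ∧ (m.map Prod.fst).sum ≤ 1

/-- One-step reduction `→ := →βv ∪ →⊕` from terms to multi-distributions: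
`C⟨(λx.M)V⟩ →βv [C⟨M[V/x]⟩]` and `W⟨M ⊕ N⟩ →⊕ [½ W⟨M⟩, ½ W⟨N⟩]`. -/
inductive Step : PTm → MDist → Prop
  | bv {M M'} : FullBv M M' → Step M (single M')
  | oplus {M M₁ M₂} : OplusRed M M₁ M₂ →
      Step M {((1 : NNReal) / 2, M₁), ((1 : NNReal) / 2, M₂)}

/-- Surface reduction `→s`: weak βv-steps together with all `→⊕`-steps. -/
inductive SStep : PTm → MDist → Prop
  | bv {M M'} : WeakBv M M' → SStep M (single M')
  | oplus {M M₁ M₂} : OplusRed M M₁ M₂ →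
      SStep M {((1 : NNReal) / 2, M₁), ((1 : NNReal) / 2, M₂)}

/-- A term is normal if it has no `→`-step. -/
def TmNormal (M : PTm) : Prop := ∀ m, ¬ Step M m

/-- A term is surface-normal if it has no `→s`-step. -/
def SurfNormal (M : PTm) : Prop := ∀ m, ¬ SStep M m

/-- The unbiased βv-strategy `⊳βv` on `Λ⊕`: weak βv-steps as long as there are any;
once the term has no weak βv-redex, iterate in the subterms. -/
inductive UnbBv : PTm → PTm → Prop
  | weak {M M'} : WeakBv M M' → UnbBv M M'
  | lam {P P'} : (∀ s, ¬ WeakBv (PTm.lam P) s) → UnbBv P P' →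
      UnbBv (PTm.lam P) (PTm.lam P')
  | appL {P P' Q} : (∀ s, ¬ WeakBv (PTm.app P Q) s) → UnbBv P P' →
      UnbBv (PTm.app P Q) (PTm.app P' Q)
  | appR {P Q Q'} : (∀ s, ¬ WeakBv (PTm.app P Q) s) → UnbBv Q Q' →
      UnbBv (PTm.app P Q) (PTm.app P Q')
  | oplusL {P P' Q} : (∀ s, ¬ WeakBv (PTm.oplus P Q) s) → UnbBv P P' →
      UnbBv (PTm.oplus P Q) (PTm.oplus P' Q)
  | oplusR {P Q Q'} : (∀ s, ¬ WeakBv (PTm.oplus P Q) s) → UnbBv Q Q' →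
      UnbBv (PTm.oplus P Q) (PTm.oplus P Q')

/-- Unbiased evaluation `⊳E` from terms to multi-distributions: a surface step if the
term is not surface-normal; otherwise an unbiased βv-step. -/
inductive EStep : PTm → MDist → Prop
  | surf {M m} : ¬ SurfNormal M → SStep M m → EStep M m
  | unb {M M'} : SurfNormal M → UnbBv M M' → EStep M (single M')

/-- Internal steps `⋫E`: `→`-steps that are not `⊳E`-steps. -/
def IStep (M : PTm) (m : MDist) : Prop := Step M m ∧ ¬ EStep M m

/-- Scalar multiplication `p • m` of a multi-distribution. -/
def scale (p : NNReal) (m : MDist) : MDist := m.map fun q => (p * q.1, q.2)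

/-- Lifting of a relation `r` from terms to multi-distributions, to a relation on
multi-distributions: `[M] ⇒r [M]`; `[M] ⇒r m` whenever `M r m`; and
`[pᵢ Mᵢ]ᵢ ⇒r Σᵢ pᵢ·mᵢ` whenever `[Mᵢ] ⇒r mᵢ` for each `i`. -/
inductive Lift (r : PTm → MDist → Prop) : MDist → MDist → Prop
  | zero : Lift r 0 0
  | keep {p M m n} : Lift r m n → Lift r ((p, M) ::ₘ m) ((p, M) ::ₘ n)
  | step {p M d m n} : r M d → Lift r m n → Lift r ((p, M) ::ₘ m) (scale p d + n)

/-- Full lifting of a relation `r` from terms to multi-distributions: as `Lift`, but a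
component may stay put only if it is a normal form. -/
inductive FullLift (r : PTm → MDist → Prop) : MDist → MDist → Prop
  | zero : FullLift r 0 0
  | keep {p M m n} : TmNormal M → FullLift r m n →
      FullLift r ((p, M) ::ₘ m) ((p, M) ::ₘ n)
  | step {p M d m n} : r M d → FullLift r m n →
      FullLift r ((p, M) ::ₘ m) (scale p d + n)

open Classical in
/-- The observation `obsN`: the subdistribution over normal forms carried by a
multi-distribution, `obsN(m)(N) = Σ { pᵢ : Mᵢ = N }` for `N` normal (and `0` on
non-normal terms). Subdistributions are ordered pointwise. -/
noncomputable def obsN (m : MDist) : PTm → NNReal := fun N =>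
  if TmNormal N then ((m.filter fun q => q.2 = N).map Prod.fst).sum else 0

/-- A multi-distribution is `R`-normal if it has no `R`-successor. -/
def MNormal (R : MDist → MDist → Prop) (m : MDist) : Prop := ∀ n, ¬ R m n

/-- An `R`-sequence from `m`: at each step either an `R`-step is performed, or the
current multi-distribution is `R`-normal and the sequence stays constant. -/
def MSeq (R : MDist → MDist → Prop) (m : MDist) (f : ℕ → MDist) : Prop :=
  f 0 = m ∧ ∀ i, R (f i) (f (i + 1)) ∨ (MNormal R (f i) ∧ f (i + 1) = f i)

/-- `m R⇓ p` : some `R`-sequence from `m` has limit (supremum of the pointwise-ordered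
subdistributions `obsN (f i)`) equal to `p`. -/
def MConv (R : MDist → MDist → Prop) (m : MDist) (p : PTm → NNReal) : Prop :=
  ∃ f : ℕ → MDist, MSeq R m f ∧ IsLUB (Set.range fun i => obsN (f i)) p

/-!
Follow the `⇒`-sequence component by component. A component `p A` is simulated by a piece
`p · c` of a `⇉E`-multi-distribution, where the `⊕`-splits of `c` mirror weak `⊕`-redexes of `A`
and the leaves of `c` parallel-reduce to the corresponding branches of `A` (`Tracks`). Confluence
of parallel reduction, together with the factorization of a parallel reduction into weak steps
followed by internal ones, lets `⇉E` match every `⇒`-step while keeping this invariant, and a leaf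
whose branch has become normal is driven to it by `⊳E`. Since `⇉E` moves all components at once,
the simulations of the components are synchronized by padding them with invariant-preserving
steps. Concatenating these simulations yields a `⇉E`-sequence from `m` whose observations
eventually dominate each `obsN (f n)`, hence its limit dominates `q`.
-/

namespace PTm

theorem lift_lift {d e : ℕ} (M : PTm) (h : d ≤ e) :
    lift d (lift e M) = lift (e + 1) (lift d M) := by
  induction M generalizing d e with
  | var n => simp only [lift]; split_ifs <;> simp only [lift] <;> split_ifs <;> grind
  | lam M ih => simp only [lift, ih (by omega : d + 1 ≤ e + 1)]
  | app M N ihM ihN => simp only [lift, ihM h, ihN h]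
  | oplus M N ihM ihN => simp only [lift, ihM h, ihN h]

theorem subst_lift {d : ℕ} (M N : PTm) : (lift d M).subst d N = M := by
  induction M generalizing d N with
  | var n => simp only [lift]; split_ifs <;> simp only [subst] <;> split_ifs <;> grind
  | lam M ih => simp only [lift, subst, ih]
  | app M M' ihM ihN => simp only [lift, subst, ihM, ihN]
  | oplus M M' ihM ihN => simp only [lift, subst, ihM, ihN]

theorem lift_subst_le {d k : ℕ} (M N : PTm) (h : d ≤ k) :
    lift d (M.subst k N) = (lift d M).subst (k + 1) (lift d N) := by
  induction M generalizing d k N with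
  | var n =>
    simp only [subst, lift]; split_ifs <;> simp only [subst, lift] <;> split_ifs <;> grind
  | lam M ih =>
    simp only [lift, subst, ih (lift 0 N) (by omega : d + 1 ≤ k + 1), lift_lift N (Nat.zero_le d)]
  | app M M' ihM ihN => simp only [lift, subst, ihM N h, ihN N h]
  | oplus M M' ihM ihN => simp only [lift, subst, ihM N h, ihN N h]

theorem lift_subst_ge {d k : ℕ} (M N : PTm) (h : k ≤ d) :
    lift d (M.subst k N) = (lift (d + 1) M).subst k (lift d N) := by
  induction M generalizing d k N with
  | var n =>
    simp only [subst, lift]; split_ifs <;> simp only [subst, lift] <;> split_ifs <;> grind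
  | lam M ih =>
    simp only [lift, subst, ih (lift 0 N) (by omega : k + 1 ≤ d + 1), lift_lift N (Nat.zero_le d)]
  | app M M' ihM ihN => simp only [lift, subst, ihM N h, ihN N h]
  | oplus M M' ihM ihN => simp only [lift, subst, ihM N h, ihN N h]

theorem subst_subst {j k : ℕ} (M V W : PTm) (h : j ≤ k) :
    (M.subst j V).subst k W = (M.subst (k + 1) (lift j W)).subst j (V.subst k W) := by
  induction M generalizing j k V W with
  | var n =>
    simp only [subst]; split_ifs <;> simp only [subst, subst_lift] <;> (try split_ifs) <;> grind
  | lam M ih =>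
    simp only [subst, ih (lift 0 V) (lift 0 W) (by omega : j + 1 ≤ k + 1),
      lift_lift W (Nat.zero_le j), lift_subst_le V W (Nat.zero_le k)]
  | app M M' ihM ihN => simp only [subst, ihM V W h, ihN V W h]
  | oplus M M' ihM ihN => simp only [subst, ihM V W h, ihN V W h]

end PTm

open PTm

/-! ### Parallel reduction and confluence -/

theorem IsValue.lift {V : PTm} (d : ℕ) (hv : IsValue V) : IsValue (lift d V) := by
  cases hv with
  | var n => simp only [PTm.lift]; split_ifs <;> exact .var _
  | lam M => exact .lam _

theorem IsValue.subst {V W : PTm} (k : ℕ) (hv : IsValue V) (hw : IsValue W) :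
    IsValue (V.subst k W) := by
  cases hv with
  | var n => simp only [PTm.subst]; split_ifs <;> first | exact hw | exact .var _
  | lam M => exact .lam _

inductive Par : PTm → PTm → Prop
  | var (n : ℕ) : Par (var n) (var n)
  | lam {M M'} : Par M M' → Par (lam M) (lam M')
  | app {M M' N N'} : Par M M' → Par N N' → Par (app M N) (app M' N')
  | oplus {M M' N N'} : Par M M' → Par N N' → Par (oplus M N) (oplus M' N')
  | beta {M M' V V'} : Par M M' → Par V V' → IsValue V →
      Par (app (lam M) V) (M'.subst 0 V')

abbrev Pars := Relation.ReflTransGen Par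

namespace Par

theorem refl (M : PTm) : Par M M := by
  induction M with
  | var n => exact .var n
  | lam M ih => exact .lam ih
  | app M N ihM ihN => exact .app ihM ihN
  | oplus M N ihM ihN => exact .oplus ihM ihN

theorem isValue {V V' : PTm} (h : Par V V') (hv : IsValue V) : IsValue V' := by
  cases hv <;> cases h <;> constructor

theorem lift {M M' : PTm} (d : ℕ) (h : Par M M') : Par (lift d M) (lift d M') := by
  induction h generalizing d with
  | var n => simp only [PTm.lift]; split_ifs <;> exact refl _
  | lam _ ih => exact .lam (ih (d + 1))
  | app _ _ ihM ihN => exact .app (ihM d) (ihN d)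
  | oplus _ _ ihM ihN => exact .oplus (ihM d) (ihN d)
  | @beta M M' V V' _ _ hv ihM ihV =>
    rw [PTm.lift, lift_subst_ge M' V' (Nat.zero_le d)]
    exact .beta (ihM (d + 1)) (ihV d) (hv.lift d)

theorem subst {M M' W W' : PTm} (h : Par M M') (hW : Par W W') (hw : IsValue W) (k : ℕ) :
    Par (M.subst k W) (M'.subst k W') := by
  induction h generalizing k W W' with
  | var n => simp only [PTm.subst]; split_ifs <;> first | exact hW | exact refl _
  | lam _ ih => exact .lam (ih (hW.lift 0) (hw.lift 0) (k + 1))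
  | app _ _ ihM ihN => exact .app (ihM hW hw k) (ihN hW hw k)
  | oplus _ _ ihM ihN => exact .oplus (ihM hW hw k) (ihN hW hw k)
  | @beta M M' V V' _ _ hv ihM ihV =>
    rw [PTm.subst, subst_subst M' V' W' (Nat.zero_le k)]
    exact .beta (ihM (hW.lift 0) (hw.lift 0) (k + 1)) (ihV hW hw k) (hv.subst k hw)

end Par

theorem FullBv.par {M M' : PTm} (h : FullBv M M') : Par M M' := by
  induction h with
  | beta hv => exact .beta (.refl _) (.refl _) hv
  | lam _ ih => exact .lam ih
  | appL _ ih => exact .app ih (.refl _)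
  | appR _ ih => exact .app (.refl _) ih
  | oplusL _ ih => exact .oplus ih (.refl _)
  | oplusR _ ih => exact .oplus (.refl _) ih

theorem WeakBv.fullBv {M M' : PTm} (h : WeakBv M M') : FullBv M M' := by
  induction h with
  | beta hv => exact .beta hv
  | appL _ ih => exact .appL ih
  | appR _ ih => exact .appR ih

theorem UnbBv.fullBv {M M' : PTm} (h : UnbBv M M') : FullBv M M' := by
  induction h with
  | weak hw => exact hw.fullBv
  | lam _ _ ih => exact .lam ih
  | appL _ _ ih => exact .appL ih
  | appR _ _ ih => exact .appR ih
  | oplusL _ _ ih => exact .oplusL ih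
  | oplusR _ _ ih => exact .oplusR ih

open Classical in
/-- Takahashi's complete development: fire every βv-redex of the term at once. -/
noncomputable def cd : PTm → PTm
  | var n => var n
  | lam M => lam (cd M)
  | oplus M N => oplus (cd M) (cd N)
  | app (lam M) N => if IsValue N then (cd M).subst 0 (cd N) else app (lam (cd M)) (cd N)
  | app M N => app (cd M) (cd N)

theorem Par.par_cd {M N : PTm} (h : Par M N) : Par N (cd M) := by
  induction h with
  | var n => exact .var n
  | lam _ ih => exact .lam ih
  | @app M M' N N' hM hN ihM ihN =>
    cases hM with
    | lam _ =>
      by_cases hv : IsValue N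
      · rw [cd, if_pos hv]
        cases ihM with
        | lam ihP => exact .beta ihP ihN (hN.isValue hv)
      · rw [cd, if_neg hv]
        exact .app ihM ihN
    | _ => exact .app ihM ihN
  | oplus _ _ ihM ihN => exact .oplus ihM ihN
  | beta _ hV hv ihM ihV =>
    rw [cd, if_pos hv]
    exact ihM.subst ihV (hV.isValue hv) 0

theorem Par.diamond {M N₁ N₂ : PTm} (h₁ : Par M N₁) (h₂ : Par M N₂) :
    ∃ P, Par N₁ P ∧ Par N₂ P :=
  ⟨cd M, h₁.par_cd, h₂.par_cd⟩

theorem Par.strip {M N₁ N₂ : PTm} (h₁ : Par M N₁) (h₂ : Pars M N₂) :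
    ∃ P, Pars N₁ P ∧ Par N₂ P := by
  induction h₂ with
  | refl => exact ⟨N₁, .refl, h₁⟩
  | tail _ hstep ih =>
    obtain ⟨P, hP₁, hP₂⟩ := ih
    obtain ⟨Q, hQ₁, hQ₂⟩ := hP₂.diamond hstep
    exact ⟨Q, hP₁.tail hQ₁, hQ₂⟩

/-! ### Factorization of parallel reduction -/

/-- Internal parallel reduction: parallel reduction firing no redex in weak position. -/
inductive ParI : PTm → PTm → Prop
  | var (n : ℕ) : ParI (var n) (var n)
  | lam {M M'} : Par M M' → ParI (lam M) (lam M')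
  | app {M M' N N'} : ParI M M' → ParI N N' → ParI (app M N) (app M' N')
  | oplus {M M' N N'} : Par M M' → Par N N' → ParI (oplus M N) (oplus M' N')

abbrev ParIs := Relation.ReflTransGen ParI

abbrev WStar := Relation.ReflTransGen WeakBv

namespace ParI

theorem par {M N : PTm} (h : ParI M N) : Par M N := by
  induction h with
  | var n => exact .var n
  | lam h => exact .lam h
  | app _ _ ihM ihN => exact .app ihM ihN
  | oplus hM hN => exact .oplus hM hN

theorem refl (M : PTm) : ParI M M := by
  induction M with
  | var n => exact .var n
  | lam M _ => exact .lam (.refl M)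
  | app M N ihM ihN => exact .app ihM ihN
  | oplus M N _ _ => exact .oplus (.refl M) (.refl N)

theorem of_par_of_isValue {V V' : PTm} (h : Par V V') (hv : IsValue V) : ParI V V' := by
  cases hv with
  | var n => cases h; exact .var n
  | lam M => cases h with | lam h => exact .lam h

theorem isValue {X V : PTm} (h : ParI X V) (hv : IsValue X) : IsValue V := by
  cases hv <;> cases h <;> constructor

theorem isValue_left {X V : PTm} (h : ParI X V) (hv : IsValue V) : IsValue X := by
  cases hv <;> cases h <;> constructor

theorem subst {M M' W W' : PTm} (h : ParI M M') (hW : Par W W') (hw : IsValue W) (k : ℕ) :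
    ParI (M.subst k W) (M'.subst k W') := by
  induction h generalizing k with
  | var n =>
    simp only [PTm.subst]
    split_ifs <;> first | exact of_par_of_isValue hW hw | exact refl _
  | lam h => exact .lam (h.subst (hW.lift 0) (hw.lift 0) (k + 1))
  | app _ _ ihM ihN => exact .app (ihM k) (ihN k)
  | oplus hM hN => exact .oplus (hM.subst hW hw k) (hN.subst hW hw k)

end ParI

theorem ParIs.pars {M N : PTm} (h : ParIs M N) : Pars M N :=
  Relation.ReflTransGen.lift id (fun _ _ => ParI.par) _ _ h

theorem WStar.appL {M M' N : PTm} (h : WStar M M') : WStar (app M N) (app M' N) :=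
  Relation.ReflTransGen.lift (app · N) (fun _ _ => WeakBv.appL) _ _ h

theorem WStar.appR {M N N' : PTm} (h : WStar N N') : WStar (app M N) (app M N') :=
  Relation.ReflTransGen.lift (app M ·) (fun _ _ => WeakBv.appR) _ _ h

theorem WeakBv.subst {M M₁ V : PTm} (h : WeakBv M M₁) (hv : IsValue V) (k : ℕ) :
    WeakBv (M.subst k V) (M₁.subst k V) := by
  induction h generalizing k with
  | @beta P U hu =>
    rw [subst_subst P U V (Nat.zero_le k)]
    exact .beta (hu.subst k hv)
  | appL _ ih => exact .appL (ih k)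
  | appR _ ih => exact .appR (ih k)

theorem WStar.subst {M M₁ V : PTm} (h : WStar M M₁) (hv : IsValue V) (k : ℕ) :
    WStar (M.subst k V) (M₁.subst k V) :=
  Relation.ReflTransGen.lift (·.subst k V) (fun _ _ hs => hs.subst hv k) _ _ h

theorem Par.exists_wStar_parI {M N : PTm} (h : Par M N) : ∃ C, WStar M C ∧ ParI C N := by
  induction h with
  | var n => exact ⟨_, .refl, .var n⟩
  | lam h => exact ⟨_, .refl, .lam h⟩
  | app _ _ ihM ihN =>
    obtain ⟨C₁, hw₁, hi₁⟩ := ihM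
    obtain ⟨C₂, hw₂, hi₂⟩ := ihN
    exact ⟨PTm.app C₁ C₂, hw₁.appL.trans hw₂.appR, .app hi₁ hi₂⟩
  | oplus hM hN => exact ⟨_, .refl, .oplus hM hN⟩
  | beta _ hV hv ihM _ =>
    obtain ⟨C₁, hw₁, hi₁⟩ := ihM
    exact ⟨_, .head (.beta hv) (hw₁.subst hv 0), hi₁.subst hV hv 0⟩

theorem ParI.exists_weakBv_par {X Y Y' : PTm} (hi : ParI X Y) (hw : WeakBv Y Y') :
    ∃ X₁, WeakBv X X₁ ∧ Par X₁ Y' := by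
  induction hw generalizing X with
  | beta hv =>
    cases hi with
    | app h₁ h₂ =>
      cases h₁ with
      | lam hP =>
        have hv' := h₂.isValue_left hv
        exact ⟨_, .beta hv', hP.subst h₂.par hv' 0⟩
  | appL _ ih =>
    cases hi with
    | app h₁ h₂ =>
      obtain ⟨X₁, hX₁, hpar⟩ := ih h₁
      exact ⟨_, .appL hX₁, .app hpar h₂.par⟩
  | appR _ ih =>
    cases hi with
    | app h₁ h₂ =>
      obtain ⟨X₁, hX₁, hpar⟩ := ih h₂
      exact ⟨_, .appR hX₁, .app h₁.par hpar⟩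

theorem Par.exists_wStar_par_of_wStar {X Y Z : PTm} (hp : Par X Y) (hw : WStar Y Z) :
    ∃ X', WStar X X' ∧ Par X' Z := by
  induction hw with
  | refl => exact ⟨X, .refl, hp⟩
  | tail _ hstep ih =>
    obtain ⟨X', hX', hpar⟩ := ih
    obtain ⟨C, hw, hi⟩ := hpar.exists_wStar_parI
    obtain ⟨X'', hX'', hpar'⟩ := hi.exists_weakBv_par hstep
    exact ⟨X'', (hX'.trans hw).tail hX'', hpar'⟩

theorem Pars.exists_wStar_parIs {B A : PTm} (h : Pars B A) : ∃ C, WStar B C ∧ ParIs C A := by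
  induction h using Relation.ReflTransGen.head_induction_on with
  | refl => exact ⟨A, .refl, .refl⟩
  | head hstep _ ih =>
    obtain ⟨D, hwD, hiD⟩ := ih
    obtain ⟨B₁, hB₁, hparD⟩ := hstep.exists_wStar_par_of_wStar hwD
    obtain ⟨C, hC, hiC⟩ := hparD.exists_wStar_parI
    exact ⟨C, hB₁.trans hC, hiD.head hiC⟩

/-! ### Weak `⊕`-redexes -/

namespace OplusRed

theorem par {A A₁ A₂ D : PTm} (ho : OplusRed A A₁ A₂) (hp : Par A D) :
    ∃ D₁ D₂, OplusRed D D₁ D₂ ∧ Par A₁ D₁ ∧ Par A₂ D₂ := by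
  induction ho generalizing D with
  | root M N =>
    cases hp with
    | oplus h₁ h₂ => exact ⟨_, _, .root _ _, h₁, h₂⟩
  | appL ho ih =>
    cases hp with
    | app h₁ h₂ =>
      obtain ⟨D₁, D₂, hD, hp₁, hp₂⟩ := ih h₁
      exact ⟨_, _, .appL hD, .app hp₁ h₂, .app hp₂ h₂⟩
    | beta _ _ _ => cases ho
  | appR ho ih =>
    cases hp with
    | app h₁ h₂ =>
      obtain ⟨D₁, D₂, hD, hp₁, hp₂⟩ := ih h₂
      exact ⟨_, _, .appR hD, .app h₁ hp₁, .app h₁ hp₂⟩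
    | beta _ _ hv => cases hv <;> cases ho

theorem pars {A A₁ A₂ D : PTm} (ho : OplusRed A A₁ A₂) (hp : Pars A D) :
    ∃ D₁ D₂, OplusRed D D₁ D₂ ∧ Pars A₁ D₁ ∧ Pars A₂ D₂ := by
  induction hp with
  | refl => exact ⟨A₁, A₂, ho, .refl, .refl⟩
  | tail _ hstep ih =>
    obtain ⟨D₁, D₂, hD, hp₁, hp₂⟩ := ih
    obtain ⟨E₁, E₂, hE, hq₁, hq₂⟩ := hD.par hstep
    exact ⟨E₁, E₂, hE, hp₁.tail hq₁, hp₂.tail hq₂⟩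

theorem of_parI {B A A₁ A₂ : PTm} (hi : ParI B A) (ho : OplusRed A A₁ A₂) :
    ∃ B₁ B₂, OplusRed B B₁ B₂ ∧ Par B₁ A₁ ∧ Par B₂ A₂ := by
  induction ho generalizing B with
  | root M N =>
    cases hi with
    | oplus h₁ h₂ => exact ⟨_, _, .root _ _, h₁, h₂⟩
  | appL _ ih =>
    cases hi with
    | app h₁ h₂ =>
      obtain ⟨B₁, B₂, hB, hp₁, hp₂⟩ := ih h₁
      exact ⟨_, _, .appL hB, .app hp₁ h₂.par, .app hp₂ h₂.par⟩
  | appR _ ih =>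
    cases hi with
    | app h₁ h₂ =>
      obtain ⟨B₁, B₂, hB, hp₁, hp₂⟩ := ih h₂
      exact ⟨_, _, .appR hB, .app h₁.par hp₁, .app h₁.par hp₂⟩

theorem of_parIs {B A A₁ A₂ : PTm} (hi : ParIs B A) (ho : OplusRed A A₁ A₂) :
    ∃ B₁ B₂, OplusRed B B₁ B₂ ∧ Pars B₁ A₁ ∧ Pars B₂ A₂ := by
  induction hi using Relation.ReflTransGen.head_induction_on with
  | refl => exact ⟨A₁, A₂, ho, .refl, .refl⟩
  | head hstep _ ih =>
    obtain ⟨C₁, C₂, hC, hp₁, hp₂⟩ := ih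
    obtain ⟨B₁, B₂, hB, hq₁, hq₂⟩ := of_parI hstep hC
    exact ⟨B₁, B₂, hB, hp₁.head hq₁, hp₂.head hq₂⟩

theorem exists_wStar_of_pars {B A A₁ A₂ : PTm} (hp : Pars B A) (ho : OplusRed A A₁ A₂) :
    ∃ B₀ B₁ B₂, WStar B B₀ ∧ OplusRed B₀ B₁ B₂ ∧ Pars B₁ A₁ ∧ Pars B₂ A₂ := by
  obtain ⟨C, hw, hi⟩ := hp.exists_wStar_parIs
  obtain ⟨B₁, B₂, hB, hp₁, hp₂⟩ := of_parIs hi ho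
  exact ⟨C, B₁, B₂, hw, hB, hp₁, hp₂⟩

theorem eq_or_commute {A K₁ K₂ S₁ S₂ : PTm} (h₁ : OplusRed A K₁ K₂) (h₂ : OplusRed A S₁ S₂) :
    (K₁ = S₁ ∧ K₂ = S₂) ∨
    ∃ E₁₁ E₁₂ E₂₁ E₂₂, OplusRed K₁ E₁₁ E₁₂ ∧ OplusRed K₂ E₂₁ E₂₂ ∧
      OplusRed S₁ E₁₁ E₂₁ ∧ OplusRed S₂ E₁₂ E₂₂ := by
  induction h₁ generalizing S₁ S₂ with
  | root M N => cases h₂; exact .inl ⟨rfl, rfl⟩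
  | @appL P P₁ P₂ Q h ih =>
    cases h₂ with
    | appL h' =>
      rcases ih h' with ⟨rfl, rfl⟩ | ⟨_, _, _, _, a₁, a₂, a₃, a₄⟩
      · exact .inl ⟨rfl, rfl⟩
      · exact .inr ⟨_, _, _, _, .appL a₁, .appL a₂, .appL a₃, .appL a₄⟩
    | @appR _ _ Q₁ Q₂ h' =>
      exact .inr ⟨app P₁ Q₁, app P₁ Q₂, app P₂ Q₁, app P₂ Q₂,
        .appR h', .appR h', .appL h, .appL h⟩
  | @appR P Q Q₁ Q₂ h ih =>
    cases h₂ with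
    | appR h' =>
      rcases ih h' with ⟨rfl, rfl⟩ | ⟨_, _, _, _, a₁, a₂, a₃, a₄⟩
      · exact .inl ⟨rfl, rfl⟩
      · exact .inr ⟨_, _, _, _, .appR a₁, .appR a₂, .appR a₃, .appR a₄⟩
    | @appL _ P₁ P₂ _ h' =>
      exact .inr ⟨app P₁ Q₁, app P₂ Q₁, app P₁ Q₂, app P₂ Q₂,
        .appL h', .appL h', .appR h, .appR h⟩

end OplusRed

/-! ### Unbiased evaluation of βv-normal forms -/

def NoBv (M : PTm) : Prop := ∀ M', ¬ FullBv M M'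

def NoWeakBv (M : PTm) : Prop := ∀ M', ¬ WeakBv M M'

def NoWeakOplus (M : PTm) : Prop := ∀ M₁ M₂, ¬ OplusRed M M₁ M₂

theorem tmNormal_iff {M : PTm} : TmNormal M ↔ NoBv M ∧ NoWeakOplus M := by
  refine ⟨fun h => ⟨fun _ hs => h _ (.bv hs), fun _ _ ho => h _ (.oplus ho)⟩, ?_⟩
  rintro ⟨h₁, h₂⟩ _ (⟨hs⟩ | ⟨ho⟩)
  exacts [h₁ _ hs, h₂ _ _ ho]

theorem surfNormal_iff {M : PTm} : SurfNormal M ↔ NoWeakBv M ∧ NoWeakOplus M := by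
  refine ⟨fun h => ⟨fun _ hs => h _ (.bv hs), fun _ _ ho => h _ (.oplus ho)⟩, ?_⟩
  rintro ⟨h₁, h₂⟩ _ (⟨hs⟩ | ⟨ho⟩)
  exacts [h₁ _ hs, h₂ _ _ ho]

theorem NoBv.lam {M : PTm} (h : NoBv (lam M)) : NoBv M :=
  fun _ hs => h _ (.lam hs)

theorem NoBv.app {M N : PTm} (h : NoBv (app M N)) : NoBv M ∧ NoBv N :=
  ⟨fun _ hs => h _ (.appL hs), fun _ hs => h _ (.appR hs)⟩

theorem NoBv.oplus {M N : PTm} (h : NoBv (oplus M N)) : NoBv M ∧ NoBv N :=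
  ⟨fun _ hs => h _ (.oplusL hs), fun _ hs => h _ (.oplusR hs)⟩

theorem NoWeakBv.app {M N : PTm} (h : NoWeakBv (app M N)) : NoWeakBv M ∧ NoWeakBv N :=
  ⟨fun _ hs => h _ (.appL hs), fun _ hs => h _ (.appR hs)⟩

theorem NoBv.noWeakBv {M : PTm} (h : NoBv M) : NoWeakBv M :=
  fun _ hs => h _ hs.fullBv

theorem Par.eq_of_noBv {A A' : PTm} (h : Par A A') (hn : NoBv A) : A' = A := by
  induction h with
  | var n => rfl
  | lam _ ih => rw [ih hn.lam]
  | app _ _ ihM ihN => rw [ihM hn.app.1, ihN hn.app.2]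
  | oplus _ _ ihM ihN => rw [ihM hn.oplus.1, ihN hn.oplus.2]
  | beta _ _ hv => exact absurd (.beta hv) (hn _)

theorem Par.parI_of_noWeakBv {B C : PTm} (h : Par B C) (hw : NoWeakBv B) : ParI B C := by
  induction h with
  | var n => exact .var n
  | lam h => exact .lam h
  | app _ _ ihM ihN => exact .app (ihM hw.app.1) (ihN hw.app.2)
  | oplus h₁ h₂ => exact .oplus h₁ h₂
  | beta _ _ hv => exact absurd (.beta hv) (hw _)

theorem ParI.noWeakBv {B C : PTm} (hi : ParI B C) (h : NoWeakBv B) : NoWeakBv C := by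
  intro s hs
  induction hs generalizing B with
  | beta hv =>
    cases hi with
    | app h₁ h₂ => cases h₁ with
      | lam _ => exact h _ (.beta (h₂.isValue_left hv))
  | appL _ ih => cases hi with
    | app h₁ _ => exact ih h₁ h.app.1
  | appR _ ih => cases hi with
    | app _ h₂ => exact ih h₂ h.app.2

theorem ParI.noWeakBv_left {B C : PTm} (hi : ParI B C) (h : NoWeakBv C) : NoWeakBv B := by
  intro s hs
  induction hs generalizing C with
  | beta hv =>
    cases hi with
    | app h₁ h₂ => cases h₁ with
      | lam _ => exact h _ (.beta (h₂.isValue hv))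
  | appL _ ih => cases hi with
    | app h₁ _ => exact ih h₁ h.app.1
  | appR _ ih => cases hi with
    | app _ h₂ => exact ih h₂ h.app.2

theorem ParIs.noWeakBv_left {B C : PTm} (hi : ParIs B C) (h : NoWeakBv C) : NoWeakBv B := by
  induction hi using Relation.ReflTransGen.head_induction_on with
  | refl => exact h
  | head hstep _ ih => exact hstep.noWeakBv_left ih

theorem Pars.parIs_of_noWeakBv {B C : PTm} (h : Pars B C) (hw : NoWeakBv B) : ParIs B C := by
  suffices ParIs B C ∧ NoWeakBv C from this.1
  induction h with
  | refl => exact ⟨.refl, hw⟩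
  | tail _ hstep ih =>
    have hi := hstep.parI_of_noWeakBv ih.2
    exact ⟨ih.1.tail hi, hi.noWeakBv ih.2⟩

theorem SStep.step {M : PTm} {d : MDist} (h : SStep M d) : Step M d := by
  cases h with
  | bv h => exact .bv h.fullBv
  | oplus h => exact .oplus h

theorem EStep.step {M : PTm} {d : MDist} (h : EStep M d) : Step M d := by
  cases h with
  | surf _ h => exact h.step
  | unb _ h => exact .bv h.fullBv

theorem TmNormal.not_eStep {M : PTm} (h : TmNormal M) {d : MDist} : ¬ EStep M d :=
  fun he => h _ he.step

theorem FullBv.exists_unbBv {M M' : PTm} (h : FullBv M M') : ∃ M'', UnbBv M M'' := by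
  induction h with
  | beta hv => exact ⟨_, .weak (.beta hv)⟩
  | lam _ ih => obtain ⟨_, h⟩ := ih; exact ⟨_, .lam nofun h⟩
  | oplusL _ ih => obtain ⟨_, h⟩ := ih; exact ⟨_, .oplusL nofun h⟩
  | oplusR _ ih => obtain ⟨_, h⟩ := ih; exact ⟨_, .oplusR nofun h⟩
  | @appL P _ Q _ ih =>
    by_cases hw : NoWeakBv (app P Q)
    · obtain ⟨_, h⟩ := ih; exact ⟨_, .appL hw h⟩
    · simp only [NoWeakBv, not_forall, not_not] at hw
      obtain ⟨_, h⟩ := hw; exact ⟨_, .weak h⟩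
  | @appR P Q _ _ ih =>
    by_cases hw : NoWeakBv (app P Q)
    · obtain ⟨_, h⟩ := ih; exact ⟨_, .appR hw h⟩
    · simp only [NoWeakBv, not_forall, not_not] at hw
      obtain ⟨_, h⟩ := hw; exact ⟨_, .weak h⟩

/-- Whether `app R S` is a root βv-redex depends only on the head constructors of `R` and
`S`. -/
theorem NoWeakBv.app_of_ctorIdx {R S R' S' : PTm} (h : NoWeakBv (PTm.app R S))
    (hR : R'.ctorIdx = R.ctorIdx) (hS : S'.ctorIdx = S.ctorIdx)
    (hR' : NoWeakBv R') (hS' : NoWeakBv S') : NoWeakBv (PTm.app R' S') := by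
  intro s hs
  cases hs with
  | beta hv =>
    have hS : IsValue S := by cases hv <;> cases S <;> first | constructor | cases hS
    cases R <;> first | exact h _ (.beta hS) | cases hR
  | appL hs => exact hR' _ hs
  | appR hs => exact hS' _ hs

theorem UnbBv.ctorIdx_eq_and_noWeakBv {R R' : PTm} (h : UnbBv R R') (hw : NoWeakBv R) :
    R'.ctorIdx = R.ctorIdx ∧ NoWeakBv R' := by
  induction h with
  | weak hs => exact absurd hs (hw _)
  | lam _ _ _ | oplusL _ _ _ | oplusR _ _ _ => exact ⟨rfl, nofun⟩
  | appL _ _ ih =>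
    obtain ⟨hidx, hP'⟩ := ih hw.app.1
    exact ⟨rfl, hw.app_of_ctorIdx hidx rfl hP' hw.app.2⟩
  | appR _ _ ih =>
    obtain ⟨hidx, hQ'⟩ := ih hw.app.2
    exact ⟨rfl, hw.app_of_ctorIdx rfl hidx hw.app.1 hQ'⟩

theorem UnbBv.noWeakOplus {R R' : PTm} (h : UnbBv R R') (hw : NoWeakBv R)
    (ho : NoWeakOplus R) : NoWeakOplus R' := by
  induction h with
  | weak hs => exact absurd hs (hw _)
  | lam _ _ _ => exact nofun
  | oplusL _ _ _ | oplusR _ _ _ => exact absurd (.root _ _) (ho _ _)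
  | appL _ _ ih =>
    rintro _ _ (_ | ⟨hab⟩ | ⟨hab⟩)
    · exact ih hw.app.1 (fun _ _ h => ho _ _ (.appL h)) _ _ hab
    · exact ho _ _ (.appR hab)
  | appR _ _ ih =>
    rintro _ _ (_ | ⟨hab⟩ | ⟨hab⟩)
    · exact ho _ _ (.appL hab)
    · exact ih hw.app.2 (fun _ _ h => ho _ _ (.appR h)) _ _ hab

theorem UnbBv.surfNormal {R R' : PTm} (h : UnbBv R R') (hs : SurfNormal R) :
    SurfNormal R' := by
  obtain ⟨hw, ho⟩ := surfNormal_iff.mp hs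
  exact surfNormal_iff.mpr ⟨(h.ctorIdx_eq_and_noWeakBv hw).2, h.noWeakOplus hw ho⟩

abbrev UnbStar := Relation.ReflTransGen UnbBv

theorem WStar.unbStar {M N : PTm} (h : WStar M N) : UnbStar M N :=
  Relation.ReflTransGen.lift id (fun _ _ => UnbBv.weak) _ _ h

theorem UnbStar.lam {P Q : PTm} (h : UnbStar P Q) : UnbStar (lam P) (lam Q) :=
  Relation.ReflTransGen.lift PTm.lam (fun _ _ => UnbBv.lam nofun) _ _ h

theorem UnbStar.oplusL {P Q S : PTm} (h : UnbStar P Q) : UnbStar (oplus P S) (oplus Q S) :=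
  Relation.ReflTransGen.lift (oplus · S) (fun _ _ => UnbBv.oplusL nofun) _ _ h

theorem UnbStar.oplusR {P Q S : PTm} (h : UnbStar P Q) : UnbStar (oplus S P) (oplus S Q) :=
  Relation.ReflTransGen.lift (oplus S ·) (fun _ _ => UnbBv.oplusR nofun) _ _ h

theorem UnbStar.appL {R R' S : PTm} (h : UnbStar R R') (hw : NoWeakBv (app R S)) :
    UnbStar (app R S) (app R' S) ∧ NoWeakBv (app R' S) := by
  induction h with
  | refl => exact ⟨.refl, hw⟩
  | tail _ hstep ih =>
    obtain ⟨hchain, hw₁⟩ := ih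
    obtain ⟨hidx, hR⟩ := hstep.ctorIdx_eq_and_noWeakBv hw₁.app.1
    exact ⟨hchain.tail (.appL hw₁ hstep), hw₁.app_of_ctorIdx hidx rfl hR hw₁.app.2⟩

theorem UnbStar.appR {R S S' : PTm} (h : UnbStar S S') (hw : NoWeakBv (app R S)) :
    UnbStar (app R S) (app R S') ∧ NoWeakBv (app R S') := by
  induction h with
  | refl => exact ⟨.refl, hw⟩
  | tail _ hstep ih =>
    obtain ⟨hchain, hw₁⟩ := ih
    obtain ⟨hidx, hS⟩ := hstep.ctorIdx_eq_and_noWeakBv hw₁.app.2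
    exact ⟨hchain.tail (.appR hw₁ hstep), hw₁.app_of_ctorIdx rfl hidx hw₁.app.1 hS⟩

namespace ParIs

theorem var_inv {X : PTm} {n : ℕ} (h : ParIs X (var n)) : X = var n := by
  induction h using Relation.ReflTransGen.head_induction_on with
  | refl => rfl
  | head hstep _ ih => subst ih; cases hstep; rfl

theorem lam_inv {X R' : PTm} (h : ParIs X (lam R')) : ∃ R, X = lam R ∧ Pars R R' := by
  induction h using Relation.ReflTransGen.head_induction_on with
  | refl => exact ⟨R', rfl, .refl⟩
  | head hstep _ ih =>
    obtain ⟨R, rfl, hR⟩ := ih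
    cases hstep with | lam h => exact ⟨_, rfl, hR.head h⟩

theorem app_inv {X R' S' : PTm} (h : ParIs X (app R' S')) :
    ∃ R S, X = app R S ∧ ParIs R R' ∧ ParIs S S' := by
  induction h using Relation.ReflTransGen.head_induction_on with
  | refl => exact ⟨R', S', rfl, .refl, .refl⟩
  | head hstep _ ih =>
    obtain ⟨R, S, rfl, hR, hS⟩ := ih
    cases hstep with | app h₁ h₂ => exact ⟨_, _, rfl, hR.head h₁, hS.head h₂⟩

theorem oplus_inv {X R' S' : PTm} (h : ParIs X (oplus R' S')) :
    ∃ R S, X = oplus R S ∧ Pars R R' ∧ Pars S S' := by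
  induction h using Relation.ReflTransGen.head_induction_on with
  | refl => exact ⟨R', S', rfl, .refl, .refl⟩
  | head hstep _ ih =>
    obtain ⟨R, S, rfl, hR, hS⟩ := ih
    cases hstep with | oplus h₁ h₂ => exact ⟨_, _, rfl, hR.head h₁, hS.head h₂⟩

end ParIs

theorem UnbStar.of_pars {P Q : PTm} (hp : Pars P Q) (hQ : NoBv Q) : UnbStar P Q := by
  obtain ⟨P₁, hw, hi⟩ := hp.exists_wStar_parIs
  refine hw.unbStar.trans ?_
  clear hp hw
  induction Q generalizing P₁ with
  | var n => rw [hi.var_inv]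
  | lam R' ih =>
    obtain ⟨R, rfl, hR⟩ := hi.lam_inv
    obtain ⟨R₁, hw, hi⟩ := hR.exists_wStar_parIs
    exact UnbStar.lam (hw.unbStar.trans (ih hQ.lam _ hi))
  | oplus R' S' ihR ihS =>
    obtain ⟨R, S, rfl, hR, hS⟩ := hi.oplus_inv
    obtain ⟨R₁, hwR, hiR⟩ := hR.exists_wStar_parIs
    obtain ⟨S₁, hwS, hiS⟩ := hS.exists_wStar_parIs
    exact (UnbStar.oplusL (hwR.unbStar.trans (ihR hQ.oplus.1 _ hiR))).trans
      (UnbStar.oplusR (hwS.unbStar.trans (ihS hQ.oplus.2 _ hiS)))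
  | app R' S' ihR ihS =>
    obtain ⟨R, S, rfl, hR, hS⟩ := hi.app_inv
    obtain ⟨hRR', hw₁⟩ := UnbStar.appL (ihR hQ.app.1 _ hR) (hi.noWeakBv_left hQ.noWeakBv)
    exact hRR'.trans (UnbStar.appR (ihS hQ.app.2 _ hS) hw₁).1

/-! ### Multi-distributions -/

@[simp] theorem scale_zero (p : NNReal) : scale p 0 = 0 := rfl

@[simp] theorem scale_cons (p q : NNReal) (M : PTm) (c : MDist) :
    scale p ((q, M) ::ₘ c) = (p * q, M) ::ₘ scale p c := by
  simp [scale]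

@[simp] theorem scale_add (p : NNReal) (a b : MDist) :
    scale p (a + b) = scale p a + scale p b := by
  simp [scale]

@[simp] theorem scale_one (c : MDist) : scale 1 c = c := by
  simp [scale]

theorem scale_scale (p q : NNReal) (c : MDist) : scale p (scale q c) = scale (p * q) c := by
  simp [scale, Multiset.map_map, mul_assoc]

theorem scale_single (p : NNReal) (M : PTm) : scale p (single M) = {(p, M)} := by
  simp [single, scale]

theorem scale_single_add (p : NNReal) (M : PTm) (c : MDist) :
    scale p (single M) + c = (p, M) ::ₘ c := by
  rw [scale_single, Multiset.singleton_add]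

theorem pair_eq_scale_add (M₁ M₂ : PTm) :
    ({((1 : NNReal) / 2, M₁), ((1 : NNReal) / 2, M₂)} : MDist)
      = scale (1 / 2) (single M₁) + scale (1 / 2) (single M₂) := by
  rw [scale_single, scale_single, Multiset.singleton_add]
  rfl

def mass (c : MDist) : NNReal := (c.map Prod.fst).sum

@[simp] theorem mass_cons (p : NNReal) (M : PTm) (c : MDist) :
    mass ((p, M) ::ₘ c) = p + mass c := by
  simp [mass]

@[simp] theorem mass_add (a b : MDist) : mass (a + b) = mass a + mass b := by
  simp [mass]

@[simp] theorem mass_scale (p : NNReal) (c : MDist) : mass (scale p c) = p * mass c := by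
  simp [mass, scale, Multiset.sum_map_mul_left]

theorem Step.mass_eq_one {M : PTm} {d : MDist} (h : Step M d) : mass d = 1 := by
  cases h with
  | bv _ => simp [single, mass]
  | oplus _ => norm_num [mass]

open Classical in
theorem obsN_cons (p : NNReal) (M : PTm) (c : MDist) (N : PTm) :
    obsN ((p, M) ::ₘ c) N = (if TmNormal N ∧ M = N then p else 0) + obsN c N := by
  by_cases hN : TmNormal N <;> by_cases hM : M = N <;> simp [obsN, hN, hM]

@[simp] theorem obsN_zero (N : PTm) : obsN 0 N = 0 := by
  simp [obsN]

theorem obsN_add (a b : MDist) (N : PTm) : obsN (a + b) N = obsN a N + obsN b N := by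
  induction a using Multiset.induction with
  | empty => simp
  | cons x a ih => rw [Multiset.cons_add, obsN_cons, obsN_cons, ih, add_assoc]

theorem obsN_scale (p : NNReal) (a : MDist) (N : PTm) : obsN (scale p a) N = p * obsN a N := by
  induction a using Multiset.induction with
  | empty => simp
  | cons x a ih =>
    rw [scale_cons, obsN_cons, obsN_cons, ih, mul_add]
    split_ifs <;> simp

theorem obsN_single {A : PTm} (hA : TmNormal A) : obsN (single A) A = 1 := by
  simp [single, ← Multiset.cons_zero, obsN_cons, hA]

theorem obsN_le_mass (c : MDist) (N : PTm) : obsN c N ≤ mass c := by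
  induction c using Multiset.induction with
  | empty => simp
  | cons x c ih =>
    rw [obsN_cons, mass_cons]
    gcongr
    split_ifs <;> simp

namespace FullLift

variable {r : PTm → MDist → Prop}

theorem add {a a' b b' : MDist} (ha : FullLift r a a') (hb : FullLift r b b') :
    FullLift r (a + b) (a' + b') := by
  induction ha with
  | zero => simpa using hb
  | keep hn _ ih => rw [Multiset.cons_add, Multiset.cons_add]; exact .keep hn ih
  | step hr _ ih => rw [Multiset.cons_add, add_assoc]; exact .step hr ih

theorem scale {a a' : MDist} (p : NNReal) (h : FullLift r a a') :
    FullLift r (scale p a) (scale p a') := by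
  induction h with
  | zero => exact .zero
  | keep hn _ ih => rw [scale_cons, scale_cons]; exact .keep hn ih
  | step hr _ ih => rw [scale_cons, scale_add, scale_scale]; exact .step hr ih

theorem refl_of_tmNormal {c : MDist} (h : ∀ x ∈ c, TmNormal x.2) : FullLift r c c := by
  induction c using Multiset.induction with
  | empty => exact .zero
  | cons x c ih =>
    exact .keep (h x (Multiset.mem_cons_self x c))
      (ih fun y hy => h y (Multiset.mem_cons_of_mem hy))

theorem single_of_tmNormal {A : PTm} (hA : TmNormal A) : FullLift r (single A) (single A) :=
  refl_of_tmNormal (by simpa [_root_.single] using hA)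

theorem single {B : PTm} {d : MDist} (h : r B d) : FullLift r (single B) d := by
  simpa [_root_.single] using FullLift.step (p := 1) h .zero

theorem mass_eq {c c' : MDist} (h : FullLift EStep c c') : mass c' = mass c := by
  induction h with
  | zero => rfl
  | keep _ _ ih => simp [ih]
  | step hr _ ih => simp [ih, hr.step.mass_eq_one]

theorem obsN_le {c c' : MDist} (h : FullLift EStep c c') (N : PTm) : obsN c N ≤ obsN c' N := by
  induction h with
  | zero => exact le_rfl
  | keep _ _ ih => rw [obsN_cons, obsN_cons]; gcongr
  | @step p M d m n hr _ ih =>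
    have hM : ¬ (TmNormal N ∧ M = N) := by
      rintro ⟨hN, rfl⟩
      exact hN.not_eStep hr
    rw [obsN_cons, obsN_add, if_neg hM, zero_add]
    exact le_add_left ih

end FullLift

/-! ### Simulating `⇒` by `⇉E` -/

local infix:50 " ⇉E " => FullLift EStep

local infix:50 " ⇉E* " => Relation.ReflTransGen (FullLift EStep)

theorem WeakBv.eStep {X Y : PTm} (h : WeakBv X Y) : EStep X (single Y) :=
  .surf (fun hs => hs _ (.bv h)) (.bv h)

theorem OplusRed.eStep {X Y Z : PTm} (h : OplusRed X Y Z) :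
    EStep X (scale (1 / 2) (single Y) + scale (1 / 2) (single Z)) := by
  rw [← pair_eq_scale_add]
  exact .surf (fun hs => hs _ (.oplus h)) (.oplus h)

theorem WStar.fullLift {X Y : PTm} (h : WStar X Y) : single X ⇉E* single Y :=
  Relation.ReflTransGen.lift single (fun _ _ hs => .single hs.eStep) _ _ h

theorem UnbStar.fullLift {X Y : PTm} (h : UnbStar X Y) (hs : SurfNormal X) :
    single X ⇉E* single Y := by
  induction h using Relation.ReflTransGen.head_induction_on with
  | refl => exact .refl
  | head hstep _ ih => exact .head (.single (.unb hs hstep)) (ih (hstep.surfNormal hs))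

theorem Pars.fullLift_of_tmNormal {B A : PTm} (hp : Pars B A) (hA : TmNormal A) :
    single B ⇉E* single A := by
  obtain ⟨hnb, hno⟩ := tmNormal_iff.mp hA
  obtain ⟨P, hw, hi⟩ := hp.exists_wStar_parIs
  have hP : SurfNormal P := by
    refine surfNormal_iff.mpr ⟨hi.noWeakBv_left hnb.noWeakBv, fun _ _ ho => ?_⟩
    obtain ⟨_, _, hA', _⟩ := ho.pars hi.pars
    exact hno _ _ hA'
  exact hw.fullLift.trans ((UnbStar.of_pars hi.pars hnb).fullLift hP)

theorem exists_eStep_of_not_tmNormal {B : PTm} (hB : ¬ TmNormal B) :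
    (∃ B', FullBv B B' ∧ EStep B (single B')) ∨
      (NoWeakBv B ∧ ∃ B₁ B₂, OplusRed B B₁ B₂) := by
  by_cases hw : NoWeakBv B
  · by_cases ho : NoWeakOplus B
    · have hnb : ¬ NoBv B := fun h => hB (tmNormal_iff.mpr ⟨h, ho⟩)
      simp only [NoBv, not_forall, not_not] at hnb
      obtain ⟨_, hb⟩ := hnb
      obtain ⟨B', hB'⟩ := hb.exists_unbBv
      exact .inl ⟨B', hB'.fullBv, .unb (surfNormal_iff.mpr ⟨hw, ho⟩) hB'⟩
    · simp only [NoWeakOplus, not_forall, not_not] at ho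
      exact .inr ⟨hw, ho⟩
  · simp only [NoWeakBv, not_forall, not_not] at hw
    obtain ⟨B', hB'⟩ := hw
    exact .inl ⟨B', hB'.fullBv, hB'.eStep⟩

def Sustains (P : MDist → Prop) : Prop := ∀ c, P c → ∃ c', c ⇉E c' ∧ P c'

def Reaches (P : MDist → Prop) (c : MDist) : Prop := ∃ c', c ⇉E* c' ∧ P c'

namespace Reaches

variable {P Q R : MDist → Prop}

theorem self {c : MDist} (h : P c) : Reaches P c := ⟨c, .refl, h⟩

theorem head {c c' : MDist} (h : c ⇉E* c') (h' : Reaches P c') : Reaches P c :=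
  let ⟨d, hd, hP⟩ := h'
  ⟨d, h.trans hd, hP⟩

theorem bind {c : MDist} (h : Reaches P c) (hPQ : ∀ d, P d → Reaches Q d) : Reaches Q c :=
  let ⟨d, hd, hP⟩ := h
  head hd (hPQ d hP)

theorem mono {c : MDist} (h : Reaches P c) (hPQ : ∀ d, P d → Q d) : Reaches Q c :=
  h.bind fun d hd => self (hPQ d hd)

end Reaches

theorem Sustains.step_of_reaches {P : MDist → Prop} (hP : Sustains P) {c : MDist}
    (h : Reaches P c) : ∃ c', c ⇉E c' ∧ Reaches P c' := by
  obtain ⟨d, hd, hPd⟩ := h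
  rcases hd.cases_head with rfl | ⟨c', hc', hd⟩
  · obtain ⟨c', hc', hPc'⟩ := hP c hPd
    exact ⟨c', hc', .self hPc'⟩
  · exact ⟨c', hc', d, hd, hPd⟩

theorem Sustains.exists_transGen {P : MDist → Prop} (hP : Sustains P) {c : MDist}
    (h : Reaches P c) : ∃ c', Relation.TransGen (FullLift EStep) c c' ∧ P c' := by
  obtain ⟨c₁, hc₁, d, hd, hPd⟩ := hP.step_of_reaches h
  exact ⟨d, .head' hc₁ hd, hPd⟩

/-- Since `⇉E` moves every component of a multi-distribution at once, two independent
`⇉E`-runs can only be merged after padding the shorter one with steps that preserve its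
target property. -/
theorem Reaches.scale_add {P Q R : MDist → Prop} (hP : Sustains P) (hQ : Sustains Q)
    {p q : NNReal} (hR : ∀ u v, P u → Q v → R (scale p u + scale q v)) {x y : MDist}
    (hx : Reaches P x) (hy : Reaches Q y) : Reaches R (scale p x + scale q y) := by
  obtain ⟨x', hxx', hx'⟩ := hx
  induction hxx' using Relation.ReflTransGen.head_induction_on generalizing y with
  | refl =>
    obtain ⟨y', hyy', hy'⟩ := hy
    induction hyy' using Relation.ReflTransGen.head_induction_on generalizing x' with
    | refl => exact .self (hR _ _ hx' hy')
    | head hy₁ _ ih =>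
      obtain ⟨x₁, hx₁, hPx₁⟩ := hP _ hx'
      exact .head (.single ((hx₁.scale p).add (hy₁.scale q))) (ih _ hPx₁)
  | head hx₁ _ ih =>
    obtain ⟨y₁, hy₁, hQy₁⟩ := hQ.step_of_reaches hy
    exact .head (.single ((hx₁.scale p).add (hy₁.scale q))) (ih hQy₁)

/-- `Tracks A c`: the `⇉E`-side multi-distribution `c` simulates the `⇒`-side term `A`. It is
built by `⊕`-splits that mirror weak `⊕`-redexes of parallel reducts of `A`, and each leaf is a
term that parallel-reduces to the corresponding branch. -/
inductive Tracks : PTm → MDist → Prop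
  | leaf {B A} : Pars B A → Tracks A (single B)
  | par {A A' c} : Par A A' → Tracks A' c → Tracks A c
  | split {A A₁ A₂ c₁ c₂} : OplusRed A A₁ A₂ → Tracks A₁ c₁ → Tracks A₂ c₂ →
      Tracks A (scale (1 / 2) c₁ + scale (1 / 2) c₂)

namespace Tracks

theorem par_right {A A' : PTm} {c : MDist} (h : Tracks A c) (hp : Par A A') : Tracks A' c := by
  induction h generalizing A' with
  | leaf hB => exact .leaf (hB.tail hp)
  | par hAX _ ih =>
    obtain ⟨Z, h₁, h₂⟩ := hAX.diamond hp
    exact .par h₂ (ih h₁)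
  | split ho _ _ ih₁ ih₂ =>
    obtain ⟨D₁, D₂, hD, hp₁, hp₂⟩ := ho.par hp
    exact .split hD (ih₁ hp₁) (ih₂ hp₂)

/-- One `⊳E`-step from a leaf: a βv-step is mirrored by a parallel step on the `⇒`-side; a
`⊕`-step is only forced when there is no weak βv-redex, and then the redex persists in `A`. -/
theorem exists_fullLift_leaf {B A : PTm} (hBA : Pars B A) :
    ∃ c, single B ⇉E c ∧ Tracks A c := by
  by_cases hB : TmNormal B
  · exact ⟨single B, .single_of_tmNormal hB, .leaf hBA⟩
  rcases exists_eStep_of_not_tmNormal hB with ⟨B', hB', he⟩ | ⟨hw, B₁, B₂, ho⟩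
  · obtain ⟨P, hP₁, hP₂⟩ := hB'.par.strip hBA
    exact ⟨single B', .single he, .par hP₂ (.leaf hP₁)⟩
  · obtain ⟨A₁, A₂, hA, hp₁, hp₂⟩ := ho.pars (hBA.parIs_of_noWeakBv hw).pars
    exact ⟨_, .single ho.eStep, .split hA (.leaf hp₁) (.leaf hp₂)⟩

theorem sustains (A : PTm) : Sustains (Tracks A) := by
  intro c h
  induction h with
  | leaf hBA => exact exists_fullLift_leaf hBA
  | par hp _ ih =>
    obtain ⟨c', h₁, h₂⟩ := ih
    exact ⟨c', h₁, .par hp h₂⟩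
  | split ho _ _ ih₁ ih₂ =>
    obtain ⟨c₁', f₁, g₁⟩ := ih₁
    obtain ⟨c₂', f₂, g₂⟩ := ih₂
    exact ⟨_, (f₁.scale _).add (f₂.scale _), .split ho g₁ g₂⟩

end Tracks

def HalfSplit (S₁ S₂ : PTm) (c : MDist) : Prop :=
  ∃ c₁ c₂, c = scale (1 / 2) c₁ + scale (1 / 2) c₂ ∧ Tracks S₁ c₁ ∧ Tracks S₂ c₂

theorem HalfSplit.sustains (S₁ S₂ : PTm) : Sustains (HalfSplit S₁ S₂) := by
  rintro _ ⟨c₁, c₂, rfl, h₁, h₂⟩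
  obtain ⟨c₁', f₁, g₁⟩ := Tracks.sustains S₁ c₁ h₁
  obtain ⟨c₂', f₂, g₂⟩ := Tracks.sustains S₂ c₂ h₂
  exact ⟨_, (f₁.scale _).add (f₂.scale _), c₁', c₂', rfl, g₁, g₂⟩

theorem Tracks.reaches_halfSplit {A S₁ S₂ : PTm} {c : MDist} (h : Tracks A c)
    (ho : OplusRed A S₁ S₂) : Reaches (HalfSplit S₁ S₂) c := by
  induction h generalizing S₁ S₂ with
  | leaf hBA =>
    obtain ⟨B₀, B₁, B₂, hw, hB, hp₁, hp₂⟩ := ho.exists_wStar_of_pars hBA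
    exact .head (hw.fullLift.tail (.single hB.eStep)) (.self ⟨_, _, rfl, .leaf hp₁, .leaf hp₂⟩)
  | par hp _ ih =>
    obtain ⟨T₁, T₂, hT, hq₁, hq₂⟩ := ho.par hp
    exact (ih hT).mono fun _ ⟨c₁, c₂, hc, g₁, g₂⟩ => ⟨c₁, c₂, hc, .par hq₁ g₁, .par hq₂ g₂⟩
  | split hK h₁ h₂ ih₁ ih₂ =>
    rcases hK.eq_or_commute ho with ⟨rfl, rfl⟩ | ⟨E₁₁, E₁₂, E₂₁, E₂₂, a₁, a₂, a₃, a₄⟩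
    · exact .self ⟨_, _, rfl, h₁, h₂⟩
    refine Reaches.scale_add (HalfSplit.sustains _ _) (HalfSplit.sustains _ _) ?_ (ih₁ a₁) (ih₂ a₂)
    rintro _ _ ⟨e₁₁, e₁₂, rfl, g₁₁, g₁₂⟩ ⟨e₂₁, e₂₂, rfl, g₂₁, g₂₂⟩
    refine ⟨_, _, ?_, .split a₃ g₁₁ g₂₁, .split a₄ g₁₂ g₂₂⟩
    simp only [scale_add]
    abel

theorem Tracks.fullLift_single_of_tmNormal {A : PTm} {c : MDist} (h : Tracks A c)
    (hA : TmNormal A) : c ⇉E* single A := by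
  induction h with
  | leaf hBA => exact hBA.fullLift_of_tmNormal hA
  | par hp _ ih =>
    obtain rfl := hp.eq_of_noBv (tmNormal_iff.mp hA).1
    exact ih hA
  | split ho _ _ _ _ => exact absurd ho ((tmNormal_iff.mp hA).2 _ _)

def Resolved (A : PTm) (c : MDist) : Prop := Tracks A c ∧ (TmNormal A → c = single A)

theorem Resolved.sustains (A : PTm) : Sustains (Resolved A) := by
  rintro c ⟨ht, hn⟩
  by_cases hA : TmNormal A
  · exact ⟨c, hn hA ▸ .single_of_tmNormal hA, ht, hn⟩
  · obtain ⟨c', hc', ht'⟩ := Tracks.sustains A c ht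
    exact ⟨c', hc', ht', (absurd · hA)⟩

theorem Tracks.reaches_resolved {A : PTm} {c : MDist} (h : Tracks A c) :
    Reaches (Resolved A) c := by
  by_cases hA : TmNormal A
  · exact ⟨single A, h.fullLift_single_of_tmNormal hA, .leaf .refl, fun _ => rfl⟩
  · exact .self ⟨h, (absurd · hA)⟩

inductive Sim (T : PTm → MDist → Prop) : MDist → MDist → Prop
  | zero : Sim T 0 0
  | cons {p A c a d} : T A c → Sim T a d → Sim T ((p, A) ::ₘ a) (scale p c + d)

namespace Sim

variable {T T' : PTm → MDist → Prop}

theorem exists_of_cons {p : NNReal} {A : PTm} {a c : MDist} (h : Sim T ((p, A) ::ₘ a) c) :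
    ∃ c₀ d, c = scale p c₀ + d ∧ T A c₀ ∧ Sim T a d := by
  generalize hx : (p, A) ::ₘ a = x at h
  induction h generalizing a with
  | zero => exact (Multiset.cons_ne_zero hx).elim
  | @cons p' A' c' a' d hc hd ih =>
    rcases Multiset.cons_eq_cons.mp hx with ⟨hpA, rfl⟩ | ⟨-, cs, rfl, rfl⟩
    · obtain ⟨rfl, rfl⟩ := Prod.mk.inj hpA
      exact ⟨c', d, rfl, hc, hd⟩
    · obtain ⟨c₀, d', rfl, hc₀, hd'⟩ := ih rfl
      exact ⟨c₀, scale p' c' + d', add_left_comm _ _ _, hc₀, .cons hc hd'⟩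

theorem single {A : PTm} {c : MDist} (h : T A c) : Sim T (_root_.single A) c := by
  have := Sim.cons (p := 1) h (.zero (T := T))
  rwa [scale_one, add_zero] at this

theorem add {a b c d : MDist} (h₁ : Sim T a c) (h₂ : Sim T b d) : Sim T (a + b) (c + d) := by
  induction h₁ with
  | zero => simpa using h₂
  | cons hc _ ih => rw [Multiset.cons_add, add_assoc]; exact .cons hc ih

theorem scale (p : NNReal) {a c : MDist} (h : Sim T a c) : Sim T (scale p a) (scale p c) := by
  induction h with
  | zero => exact .zero
  | cons hc _ ih => rw [scale_cons, scale_add, scale_scale]; exact .cons hc ih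

theorem mono (hTT' : ∀ A c, T A c → T' A c) {a c : MDist} (h : Sim T a c) : Sim T' a c := by
  induction h with
  | zero => exact .zero
  | cons hc _ ih => exact .cons (hTT' _ _ hc) ih

theorem sustains (hT : ∀ A, Sustains (T A)) (a : MDist) : Sustains (Sim T a) := by
  intro c h
  induction h with
  | zero => exact ⟨0, .zero, .zero⟩
  | cons hc _ ih =>
    obtain ⟨c', hcc', hc'⟩ := hT _ _ hc
    obtain ⟨d', hdd', hd'⟩ := ih
    exact ⟨_, (hcc'.scale _).add hdd', .cons hc' hd'⟩

theorem reaches_of_forall (hT' : ∀ A, Sustains (T' A))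
    (hTT' : ∀ A c, T A c → Reaches (T' A) c) {a c : MDist} (h : Sim T a c) :
    Reaches (Sim T' a) c := by
  induction h with
  | zero => exact .self .zero
  | cons hc _ ih =>
    simpa using Reaches.scale_add (q := 1) (hT' _) (sustains hT' _)
      (fun _ _ hu hv => .cons hu (by simpa using hv)) (hTT' _ _ hc) ih

end Sim

theorem Tracks.reaches_sim_of_step {M : PTm} {c d : MDist} (h : Tracks M c) (hs : Step M d) :
    Reaches (Sim Tracks d) c := by
  cases hs with
  | bv hb => exact .self (.single (h.par_right hb.par))
  | oplus ho =>
    refine (h.reaches_halfSplit ho).mono fun _ ⟨c₁, c₂, hc, g₁, g₂⟩ => ?_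
    simpa [hc] using Sim.cons g₁ (.cons g₂ .zero)

theorem Sim.reaches_of_lift {a a' c : MDist} (h : Lift Step a a') (hs : Sim Tracks a c) :
    Reaches (Sim Tracks a') c := by
  induction h generalizing c with
  | zero => exact .self hs
  | keep _ ih =>
    obtain ⟨c₀, d, rfl, hc₀, hd⟩ := hs.exists_of_cons
    simpa using Reaches.scale_add (q := 1) (Tracks.sustains _) (sustains Tracks.sustains _)
      (fun _ _ hu hv => .cons hu (by simpa using hv)) (.self hc₀) (ih hd)
  | step hr _ ih =>
    obtain ⟨c₀, d, rfl, hc₀, hd⟩ := hs.exists_of_cons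
    simpa using Reaches.scale_add (q := 1) (sustains Tracks.sustains _)
      (sustains Tracks.sustains _) (fun _ _ hu hv => (hu.scale _).add (by simpa using hv))
      (hc₀.reaches_sim_of_step hr) (ih hd)

theorem Sim.exists_transGen_of_lift {a a' c : MDist} (h : Lift Step a a')
    (hs : Sim Resolved a c) :
    ∃ c', Relation.TransGen (FullLift EStep) c c' ∧ Sim Resolved a' c' :=
  (sustains Resolved.sustains a').exists_transGen <|
    (reaches_of_lift h (hs.mono fun _ _ h => h.1)).bind fun _ hd =>
      hd.reaches_of_forall Resolved.sustains fun _ _ h => h.reaches_resolved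

theorem Sim.resolved_self (a : MDist) : Sim Resolved a a := by
  induction a using Multiset.induction with
  | empty => exact .zero
  | cons x a ih =>
    have := Sim.cons (p := x.1) (⟨.leaf .refl, fun _ => rfl⟩ : Resolved x.2 (_root_.single x.2)) ih
    rwa [scale_single_add] at this

theorem Sim.obsN_le {a c : MDist} (h : Sim Resolved a c) : obsN a ≤ obsN c := by
  intro N
  induction h with
  | zero => exact le_rfl
  | @cons p A c a d hc _ ih =>
    rw [obsN_cons, obsN_add]
    gcongr
    split_ifs with hN
    · obtain ⟨hN, rfl⟩ := hN
      rw [hc.2 hN, obsN_scale, obsN_single hN, mul_one]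
    · exact zero_le

theorem Lift.refl (r : PTm → MDist → Prop) (a : MDist) : Lift r a a := by
  induction a using Multiset.induction with
  | empty => exact .zero
  | cons _ _ ih => exact .keep ih

theorem bddAbove_range_obsN {g : ℕ → MDist} (hg : ∀ i, g i ⇉E g (i + 1)) :
    BddAbove (Set.range fun i => obsN (g i)) := by
  have hmass (i : ℕ) : mass (g i) = mass (g 0) := by
    induction i with
    | zero => rfl
    | succ i ih => rw [(hg i).mass_eq, ih]
  refine ⟨fun _ => mass (g 0), ?_⟩
  rintro _ ⟨i, rfl⟩ N
  exact (obsN_le_mass _ N).trans_eq (hmass i)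

/-! ### Concatenating finite runs -/

theorem Relation.TransGen.exists_path {α : Type*} {R : α → α → Prop} {a b : α}
    (h : Relation.TransGen R a b) :
    ∃ (L : ℕ) (F : ℕ → α), 0 < L ∧ F 0 = a ∧ F L = b ∧ ∀ i < L, R (F i) (F (i + 1)) := by
  induction h using Relation.TransGen.head_induction_on with
  | @single a hab =>
    refine ⟨1, fun i => if i = 0 then a else b, one_pos, rfl, rfl, fun i hi => ?_⟩
    obtain rfl : i = 0 := by omega
    simpa using hab
  | @head a c hac _ ih =>
    obtain ⟨L, F, -, hF0, hFL, hF⟩ := ih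
    refine ⟨L + 1, fun i => Nat.casesOn i a F, L.succ_pos, rfl, hFL, ?_⟩
    rintro (_ | i) hi
    · show R a (F 0)
      rwa [hF0]
    · exact hF i (by omega)

theorem exists_seq_of_paths {α : Type*} {R : α → α → Prop} (c : ℕ → α) (L : ℕ → ℕ)
    (F : ℕ → ℕ → α) (hL : ∀ n, 0 < L n) (hF0 : ∀ n, F n 0 = c n)
    (hFL : ∀ n, F n (L n) = c (n + 1)) (hF : ∀ n, ∀ i < L n, R (F n i) (F n (i + 1))) :
    ∃ g : ℕ → α, g 0 = c 0 ∧ (∀ i, R (g i) (g (i + 1))) ∧ ∀ n, ∃ k, g k = c n := by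
  -- `pos i = (n, j)`: at time `i` the sequence is at position `j` of the path `F n`
  let pos : ℕ → ℕ × ℕ := fun i =>
    Nat.rec (0, 0) (fun _ s => if s.2 + 1 < L s.1 then (s.1, s.2 + 1) else (s.1 + 1, 0)) i
  have pos_succ (i : ℕ) : pos (i + 1) =
      if (pos i).2 + 1 < L (pos i).1 then ((pos i).1, (pos i).2 + 1) else ((pos i).1 + 1, 0) :=
    rfl
  have pos_lt (i : ℕ) : (pos i).2 < L (pos i).1 := by
    induction i with
    | zero => exact hL 0
    | succ i _ => rw [pos_succ]; split_ifs with h; exacts [h, hL _]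
  refine ⟨fun i => F (pos i).1 (pos i).2, hF0 0, fun i => ?_, fun n => ?_⟩
  · show R (F (pos i).1 (pos i).2) (F (pos (i + 1)).1 (pos (i + 1)).2)
    have hstep := hF _ _ (pos_lt i)
    rw [pos_succ]
    split_ifs with h
    · exact hstep
    · have := pos_lt i
      rwa [hF0, ← hFL, ← show (pos i).2 + 1 = L (pos i).1 by omega]
  · suffices ∃ k, pos k = (n, 0) by
      obtain ⟨k, hk⟩ := this
      exact ⟨k, by simp only [hk, hF0]⟩
    induction n with
    | zero => exact ⟨0, rfl⟩
    | succ n ih =>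
      obtain ⟨k, hk⟩ := ih
      have walk (j : ℕ) (hj : j < L n) : pos (k + j) = (n, j) := by
        induction j with
        | zero => exact hk
        | succ j ihj => rw [← add_assoc, pos_succ, ihj (by omega), if_pos hj]
      refine ⟨k + (L n - 1) + 1, ?_⟩
      have := hL n
      rw [pos_succ, walk _ (by omega), if_neg (by dsimp only; omega)]

theorem exists_seq_of_forall_transGen {α : Type*} {R : α → α → Prop} {P : ℕ → α → Prop}
    {x₀ : α} (h₀ : P 0 x₀) (hstep : ∀ n x, P n x → ∃ y, Relation.TransGen R x y ∧ P (n + 1) y) :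
    ∃ g : ℕ → α, g 0 = x₀ ∧ (∀ i, R (g i) (g (i + 1))) ∧ ∀ n, ∃ k, P n (g k) := by
  choose! next hnext hPnext using hstep
  let c : ℕ → α := fun n => Nat.rec x₀ next n
  have hc (n : ℕ) : P n (c n) := by
    induction n with
    | zero => exact h₀
    | succ n ih => exact hPnext n _ ih
  choose L F hL hF0 hFL hF using fun n => (hnext n _ (hc n)).exists_path
  obtain ⟨g, hg0, hg, hgc⟩ := exists_seq_of_paths c L F hL hF0 hFL hF
  refine ⟨g, hg0, hg, fun n => ?_⟩
  obtain ⟨k, hk⟩ := hgc n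
  exact ⟨k, hk ▸ hc n⟩

theorem prob_cbv_asymptotic_completeness_general (m : MDist)
    (q : PTm → NNReal) (h : MConv (Lift Step) m q) :
    ∃ p : PTm → NNReal, q ≤ p ∧ MConv (FullLift EStep) m p := by
  obtain ⟨f, ⟨rfl, hf⟩, hq⟩ := h
  have hlift (n : ℕ) : Lift Step (f n) (f (n + 1)) :=
    (hf n).resolve_right fun hn => hn.1 _ (Lift.refl _ _)
  obtain ⟨g, hg0, hg, hsim⟩ := exists_seq_of_forall_transGen (R := FullLift EStep)
    (P := fun n c => Sim Resolved (f n) c) (Sim.resolved_self _)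
    fun n _ hc => hc.exists_transGen_of_lift (hlift n)
  have hbdd := bddAbove_range_obsN hg
  refine ⟨⨆ i, obsN (g i), hq.2 ?_, g, ⟨hg0, fun i => .inl (hg i)⟩, isLUB_ciSup hbdd⟩
  rintro _ ⟨n, rfl⟩
  obtain ⟨k, hk⟩ := hsim n
  exact hk.obsN_le.trans (le_ciSup hbdd k)

/-- **Asymptotic completeness of full unbiased evaluation** in the probabilistic
Call-by-Value λ-calculus: if `m ⇒⇓ q` then there exists a subdistribution `p` over
normal forms with `q ≤ p` (pointwise) and `m ⇉E⇓ p`. -/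
theorem prob_cbv_asymptotic_completeness (m : MDist) (hm : IsMDist m)
    (q : PTm → NNReal) (h : MConv (Lift Step) m q) :
    ∃ p : PTm → NNReal, q ≤ p ∧ MConv (FullLift EStep) m p :=
  prob_cbv_asymptotic_completeness_general m q h
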